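/- arXiv:1505.06488 — 3 statements merged into one kernel-verified Lean document; each statement's English description precedes it below -/
import Mathlib

section
/- Fix q₂, q₃, q₄, q₅ ∈ ℂ with q₂ ≠ 0. Let Z ⊂ ℙ¹ × ℙ² be defined by (r + s q₃)v₁ + s q₄ v₂ - s q₂ v₄ = 0 and s q₄ v₁ + s q₅ v₂ - s q₂ v₅ = 0, in appropriate coordinates on ℙ(ℂ⁵/⟨p,q⟩) ≅ ℙ². Then exactly one fiber of the first projection, namely over (r:s) = (1:0), is contained in Z, and there is no section of the first projection contained in Z that is constant in the second factor; consequently Z has two irreducible components of classes [L₁] and [L₁] + [L₂]. -/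
open Matrix

noncomputable section

/-- Coefficient matrix of the equations `(r + s q₃)v₁ + s q₄ v₂ - s q₂ v₄ = 0` and
`s q₄ v₁ + s q₅ v₂ - s q₂ v₅ = 0` cutting out the variety of lines through a point of
the orbit `o₃` of `G(1,4) ∩ H²`. -/
def M9 (q2 q3 q4 q5 r s : ℂ) : Matrix (Fin 2) (Fin 5) ℂ :=
  !![r + s * q3, s * q4, 0, -(s * q2), 0;
     s * q4, s * q5, 0, 0, -(s * q2)]

/-- Exactly one fiber of the first projection, over `(r:s) = (1:0)`, gives a
`4`-dimensional solution space (so a line component in the fiber), and every solution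
independent of `(r:s)` lies in `span{p,q}` (no constant section in the second factor);
consequently `Z` has two irreducible components of classes `[L₁]` and `[L₁] + [L₂]`. -/
theorem Z9_components (q2 q3 q4 q5 : ℂ) (hq2 : q2 ≠ 0) :
    (∀ r s : ℂ, ¬(r = 0 ∧ s = 0) →
      (Module.finrank ℂ (LinearMap.ker (M9 q2 q3 q4 q5 r s).mulVecLin) = 4 ↔ s = 0)) ∧
    (∀ v : Fin 5 → ℂ, (∀ r s : ℂ, (M9 q2 q3 q4 q5 r s).mulVec v = 0) →
      v ∈ Submodule.span ℂ {(![0, 0, 1, 0, 0] : Fin 5 → ℂ), ![0, q2, q3, q4, q5]}) := by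
  constructor
  · intro r s hrs
    constructor
    · intro h
      by_contra hs
      have hsq : s * q2 ≠ 0 := mul_ne_zero hs hq2
      have hr : LinearMap.range (M9 q2 q3 q4 q5 r s).mulVecLin = ⊤ := by
        rw [LinearMap.range_eq_top]
        intro w
        refine ⟨![0, 0, 0, -(w 0) / (s * q2), -(w 1) / (s * q2)], ?_⟩
        funext i
        fin_cases i <;>
          · simp [M9, Matrix.mulVecLin, Matrix.mulVec, dotProduct,
              Fin.sum_univ_five]
            field_simp
      have h5 := LinearMap.finrank_range_add_finrank_ker (M9 q2 q3 q4 q5 r s).mulVecLin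
      rw [hr, h] at h5
      simp [finrank_top] at h5
    · intro hs
      have hr : r ≠ 0 := fun h0 => hrs ⟨h0, hs⟩
      have hker : LinearMap.ker (M9 q2 q3 q4 q5 r s).mulVecLin
          = LinearMap.ker (LinearMap.proj 0 : (Fin 5 → ℂ) →ₗ[ℂ] ℂ) := by
        ext v
        simp [LinearMap.mem_ker, M9, Matrix.mulVecLin, Matrix.mulVec, dotProduct,
          Fin.sum_univ_five, hs, funext_iff, Fin.forall_fin_two, mul_eq_zero, hr]
      have h5 := LinearMap.finrank_range_add_finrank_ker
        (LinearMap.proj 0 : (Fin 5 → ℂ) →ₗ[ℂ] ℂ)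
      have hrng : LinearMap.range (LinearMap.proj 0 : (Fin 5 → ℂ) →ₗ[ℂ] ℂ) = ⊤ :=
        LinearMap.range_eq_top.mpr (fun c => ⟨fun _ => c, rfl⟩)
      rw [hrng] at h5
      simp [finrank_top] at h5
      rw [hker]
      omega
  · intro v hv
    have h1 := congrFun (hv 1 0) 0
    have h2 := congrFun (hv 0 1) 0
    have h3 := congrFun (hv 0 1) 1
    simp [M9, Matrix.mulVec, dotProduct, Fin.sum_univ_five] at h1 h2 h3
    rw [Submodule.mem_span_pair]
    refine ⟨v 2 - v 1 * q3 / q2, v 1 / q2, ?_⟩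
    funext i
    fin_cases i
    · simpa using h1.symm
    · simp
      field_simp
    · simp
      field_simp
      ring
    · simp
      field_simp
      linear_combination h2 - q3 * h1
    · simp
      field_simp
      linear_combination h3 - q4 * h1
end
end

section
/- Let Z ⊂ ℙ¹ × ℙ³ (coordinates (r:s), (v₂:v₄:v₅:v₆)) be defined by -r·v₂ - s·v₄ - s·v₆ = 0 and -r·v₂ + s·v₆ = 0. Then exactly one fiber of the first projection is contained in Z, namely over (r:s) = (1:0), and Z contains no subvariety of the form ℙ¹ × ℓ for a line ℓ ⊂ ℙ³. Hence Z has exactly two irreducible components, of classes [P] and [P] + [L]. -/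
/-!
The fiber of `Z` over `(r:s)` is the projectivised kernel of `M12 r s`, so by rank–nullity it is
a plane exactly when `M12 r s` has rank `1`. For `s ≠ 0` the `v₄`- and `v₆`-columns show that the
two rows are independent, while for `s = 0` both rows equal `(-r, 0, 0, 0)`. A vector killed by
`M12 r s` for all `(r:s)` is killed by `M12 1 0` and `M12 0 1`, which forces `v₂ = v₄ = v₆ = 0`.
-/

open Matrix

noncomputable section

/-- Coefficient matrix of the equations `-r·v₂ - s·v₄ - s·v₆ = 0` and
`-r·v₂ + s·v₆ = 0` in the coordinates `(v₂, v₄, v₅, v₆)`, cutting out the variety of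
lines through a point of the orbit `o₂` of `G(1,5) ∩ H²`. -/
def M12 (r s : ℂ) : Matrix (Fin 2) (Fin 4) ℂ :=
  !![-r, -s, 0, -s;
     -r, 0, 0, s]

theorem Matrix.rank_add_finrank_ker_mulVecLin {K m n : Type*} [Field K] [Fintype n]
    (A : Matrix m n K) :
    A.rank + Module.finrank K (LinearMap.ker A.mulVecLin) = Fintype.card n := by
  rw [Matrix.rank, LinearMap.finrank_range_add_finrank_ker, Module.finrank_fintype_fun_eq_card]

theorem M12_rank_of_ne_zero (r : ℂ) {s : ℂ} (hs : s ≠ 0) : (M12 r s).rank = 2 := by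
  refine LinearIndependent.rank_matrix ?_
  rw [Fintype.linearIndependent_iff]
  intro g hg
  have hv₄ := congrFun hg 1
  have hv₆ := congrFun hg 3
  simp only [M12, Fin.sum_univ_two, Finset.sum_apply, Pi.smul_apply, row, of_apply,
    cons_val', cons_val_zero, cons_val_one, cons_val, empty_val', cons_val_fin_one,
    smul_eq_mul, Pi.zero_apply] at hv₄ hv₆
  have hg₀ : g 0 = 0 := by simpa [hs] using hv₄
  have hg₁ : g 1 = 0 := by simpa [hg₀, hs] using hv₆
  intro i
  fin_cases i
  exacts [hg₀, hg₁]

theorem M12_rank_of_eq_zero {r : ℂ} (hr : r ≠ 0) : (M12 r 0).rank = 1 := by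
  have hrows : (M12 r 0).row = fun _ => ![-r, 0, 0, 0] := by
    ext i j
    fin_cases i <;> fin_cases j <;> simp [M12]
  rw [rank_eq_finrank_span_row, hrows, Set.range_const, finrank_span_singleton]
  simpa using hr

theorem mem_span_single_of_forall_M12_mulVec_eq_zero {t : Fin 4 → ℂ}
    (ht : ∀ r s : ℂ, (M12 r s).mulVec t = 0) :
    t ∈ Submodule.span ℂ {(Pi.single 2 1 : Fin 4 → ℂ)} := by
  have h₁ := congrFun (ht 1 0) 0
  have h₂ := congrFun (ht 0 1) 0
  have h₃ := congrFun (ht 0 1) 1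
  simp only [mulVec, dotProduct, M12, neg_zero, of_apply, cons_val', cons_val_fin_one,
    cons_val_zero, Fin.sum_univ_four, neg_mul, one_mul, cons_val_one, zero_mul, add_zero, cons_val,
    Pi.zero_apply, neg_eq_zero, zero_add] at h₁ h₂ h₃
  have ht₁ : t 1 = 0 := by linear_combination -h₂ - h₃
  rw [Submodule.mem_span_singleton]
  refine ⟨t 2, ?_⟩
  funext i
  fin_cases i <;> simp [h₁, ht₁, h₃]

/-- Exactly one fiber of the first projection, over `(r:s) = (1:0)`, carries a plane
component (the solution space is `3`-dimensional exactly when `s = 0`), and every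
solution independent of `(r:s)` is a multiple of `e₅ = (0,0,1,0)`, so `Z` contains no
subvariety `ℙ¹ × ℓ` for a line `ℓ ⊂ ℙ³`; hence `Z` has exactly two irreducible
components, of classes `[P]` and `[P] + [L]`. -/
theorem Z12_components :
    (∀ r s : ℂ, ¬(r = 0 ∧ s = 0) →
      (Module.finrank ℂ (LinearMap.ker (M12 r s).mulVecLin) = 3 ↔ s = 0)) ∧
    (∀ t : Fin 4 → ℂ, (∀ r s : ℂ, (M12 r s).mulVec t = 0) →
      t ∈ Submodule.span ℂ {(Pi.single 2 1 : Fin 4 → ℂ)}) := by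
  refine ⟨fun r s hrs => ?_, fun t => mem_span_single_of_forall_M12_mulVec_eq_zero⟩
  have hnullity := (M12 r s).rank_add_finrank_ker_mulVecLin
  rw [Fintype.card_fin] at hnullity
  by_cases hs : s = 0
  · subst hs
    rw [M12_rank_of_eq_zero fun hr => hrs ⟨hr, rfl⟩] at hnullity
    simp only [iff_true]
    omega
  · rw [M12_rank_of_ne_zero r hs] at hnullity
    simp only [hs, iff_false]
    omega
end
end

section
/- Let p = (0,0,1,0,0), q = (0,q₂,q₃,q₄,q₅) ∈ ℂ⁵ with q₂ ≠ 0. Suppose v = (v₁,…,v₅) ∈ ℂ⁵ satisfies, for all (r,s) ∈ ℂ², the equations (r + s q₃)v₁ + s q₄ v₂ - s q₂ v₄ = 0 and s q₄ v₁ + s q₅ v₂ - s q₂ v₅ = 0. Then v ∈ span{p, q}. -/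
theorem smul_add_smul_eq_self_of_coords {K : Type*} [Field K] {q2 q3 q4 q5 : K}
    (hq2 : q2 ≠ 0) {v : Fin 5 → K}
    (h0 : v 0 = 0) (h3 : v 3 = q4 * v 1 / q2) (h4 : v 4 = q5 * v 1 / q2) :
    (v 2 - v 1 * q3 / q2) • ![0, 0, 1, 0, 0] + (v 1 / q2) • ![0, q2, q3, q4, q5] = v := by
  funext i
  fin_cases i <;> simp [h0, h3, h4, hq2] <;> ring

/-- If `v ∈ ℂ⁵` satisfies `(r + s q₃)v₁ + s q₄ v₂ - s q₂ v₄ = 0` and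
`s q₄ v₁ + s q₅ v₂ - s q₂ v₅ = 0` for all `(r,s) ∈ ℂ²`, then `v` lies in the span of
`p = (0,0,1,0,0)` and `q = (0,q₂,q₃,q₄,q₅)` (assuming `q₂ ≠ 0`). -/
theorem solutions_for_all_rs_in_span (q2 q3 q4 q5 : ℂ) (hq2 : q2 ≠ 0)
    (v : Fin 5 → ℂ)
    (hv : ∀ r s : ℂ,
      (r + s * q3) * v 0 + s * q4 * v 1 - s * q2 * v 3 = 0 ∧
      s * q4 * v 0 + s * q5 * v 1 - s * q2 * v 4 = 0) :
    v ∈ Submodule.span ℂ {(![0, 0, 1, 0, 0] : Fin 5 → ℂ), ![0, q2, q3, q4, q5]} := by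
  have h0 : v 0 = 0 := by simpa using (hv 1 0).1
  obtain ⟨h3, h4⟩ := hv 0 1
  rw [h0] at h3 h4
  rw [Submodule.mem_span_pair]
  exact ⟨_, _, smul_add_smul_eq_self_of_coords hq2 h0
    (by field_simp; linear_combination -h3) (by field_simp; linear_combination -h4)⟩
end
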